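/- For a decreasing filtration F on a finite-dimensional complex vector space V such that F and its complex conjugate F̄ are r-opposed (F^p ⊕ F̄^{r−p+1} = V for all p), setting H^{p,q} := F^p ∩ F̄^q for p+q = r gives a direct sum decomposition V = ⊕_{p+q=r} H^{p,q}. -/

import Mathlib

/-- Let `F` be a finite decreasing filtration on a finite-dimensional `ℂ`-vector space
`V` and `Fbar` its conjugate filtration (with respect to a real structure `σ`).  If `F`
and `Fbar` are `r`-opposed, i.e. `F^p ⊕ Fbar^{r-p+1} = V` for all `p`, then setting
`H^{p,q} := F^p ∩ Fbar^q` for `p + q = r` yields a direct sum decomposition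
`V = ⊕_{p+q=r} H^{p,q}`. -/
theorem opposed_filtrations_give_decomposition {V : Type*} [AddCommGroup V] [Module ℂ V]
    [FiniteDimensional ℂ V]
    (σ : V →+ V)
    (hconj : ∀ (c : ℂ) (v : V), σ (c • v) = (starRingEnd ℂ) c • σ v)
    (hinv : ∀ v : V, σ (σ v) = v)
    (F Fbar : ℤ → Submodule ℂ V)
    (hF : ∀ p p' : ℤ, p ≤ p' → F p' ≤ F p)
    (hFbar : ∀ q q' : ℤ, q ≤ q' → Fbar q' ≤ Fbar q)
    (hconjF : ∀ p : ℤ, σ '' (F p : Set V) = (Fbar p : Set V))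
    (hfin₁ : ∃ a : ℤ, F a = ⊤) (hfin₂ : ∃ b : ℤ, F b = ⊥)
    (r : ℤ)
    (hopp₁ : ∀ p : ℤ, F p ⊓ Fbar (r - p + 1) = ⊥)
    (hopp₂ : ∀ p : ℤ, F p ⊔ Fbar (r - p + 1) = ⊤) :
    DirectSum.IsInternal (fun p : ℤ => F p ⊓ Fbar (r - p)) := by
  -- Key step: `F p ≤ (F p ⊓ Fbar (r - p)) ⊔ F (p + 1)`.
  have key : ∀ p : ℤ, F p ≤ (F p ⊓ Fbar (r - p)) ⊔ F (p + 1) := by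
    intro p v hv
    have hmem : v ∈ F (p + 1) ⊔ Fbar (r - (p + 1) + 1) := by
      rw [hopp₂ (p + 1)]; trivial
    obtain ⟨x, hx, y, hy, hxy⟩ := Submodule.mem_sup.mp hmem
    have hy' : y ∈ Fbar (r - p) := by
      have h : r - (p + 1) + 1 = r - p := by ring
      rwa [h] at hy
    have hyF : y ∈ F p := by
      have h : y = v - x := by rw [← hxy]; abel
      rw [h]
      exact Submodule.sub_mem _ hv (hF p (p + 1) (by omega) hx)
    exact Submodule.mem_sup.mpr ⟨y, ⟨hyF, hy'⟩, x, hx, by rw [← hxy]; abel⟩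
  -- Core disjointness.
  have disj : ∀ p : ℤ,
      Disjoint (F p ⊓ Fbar (r - p)) (F (p + 1) ⊔ Fbar (r - p + 1)) := by
    intro p
    rw [Submodule.disjoint_def]
    rintro v ⟨hvF, hvFb⟩ hv2
    obtain ⟨x, hx, y, hy, hxy⟩ := Submodule.mem_sup.mp hv2
    have hx0 : x = 0 := by
      have hxFb : x ∈ Fbar (r - p) := by
        have h : x = v - y := by rw [← hxy]; abel
        rw [h]
        exact Submodule.sub_mem _ hvFb (hFbar (r - p) (r - p + 1) (by omega) hy)
      have := hopp₁ (p + 1)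
      have h : r - (p + 1) + 1 = r - p := by ring
      rw [h] at this
      have : x ∈ (⊥ : Submodule ℂ V) := this ▸ ⟨hx, hxFb⟩
      simpa using this
    have hvy : v = y := by rw [← hxy, hx0]; abel
    have : v ∈ (⊥ : Submodule ℂ V) := (hopp₁ p) ▸ ⟨hvF, hvy ▸ hy⟩
    simpa using this
  rw [DirectSum.isInternal_submodule_iff_iSupIndep_and_iSup_eq_top]
  constructor
  · -- independence
    intro p
    have hsup : (⨆ p' ≠ p, F p' ⊓ Fbar (r - p')) ≤ F (p + 1) ⊔ Fbar (r - p + 1) := by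
      refine iSup_le fun p' => iSup_le fun hne => ?_
      rcases lt_or_gt_of_ne hne with h | h
      · exact (inf_le_right.trans (hFbar _ _ (by omega))).trans le_sup_right
      · exact (inf_le_left.trans (hF _ _ (by omega))).trans le_sup_left
    exact (disj p).mono_right hsup
  · -- the pieces span
    obtain ⟨a, ha⟩ := hfin₁
    obtain ⟨b, hb⟩ := hfin₂
    have step : ∀ n : ℕ, F (b - n) ≤ ⨆ p : ℤ, F p ⊓ Fbar (r - p) := by
      intro n
      induction n with
      | zero => simpa [hb] using (bot_le : (⊥ : Submodule ℂ V) ≤ _)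
      | succ n ih =>
        have heq : (b - ((n : ℤ) + 1)) + 1 = b - n := by ring
        calc F (b - ((n : ℕ) + 1 : ℕ))
            ≤ (F (b - ((n : ℤ) + 1)) ⊓ Fbar (r - (b - ((n : ℤ) + 1)))) ⊔
              F ((b - ((n : ℤ) + 1)) + 1) := by
              push_cast
              exact key _
          _ ≤ ⨆ p : ℤ, F p ⊓ Fbar (r - p) := by
              refine sup_le (le_iSup (fun p => F p ⊓ Fbar (r - p)) _) ?_
              rw [heq]; exact ih
    set n : ℕ := (b - a).toNat with hn
    have hle : b - (n : ℤ) ≤ a := by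
      have := Int.self_le_toNat (b - a)
      omega
    have : (⊤ : Submodule ℂ V) ≤ ⨆ p : ℤ, F p ⊓ Fbar (r - p) := by
      calc (⊤ : Submodule ℂ V) = F a := ha.symm
        _ ≤ F (b - (n : ℤ)) := hF _ _ hle
        _ ≤ _ := step n
    exact top_unique this
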